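/- For a digraph D and an integer l, there exists a coloring of D with l colors that is both acyclic and complete if and only if dc(D) ≤ l ≤ dac(D). -/

import Mathlib

/-!
An acyclic coloring with `dc` colors is complete: two classes with no arc from one to the
other can be merged without creating a cycle. Going down from a complete acyclic coloring with
`k + 1 > dc + 1` colors, choose one with a largest possible class `G`. If a vertex outside `G`
can join `G` acyclically, moving it either empties its old class or breaks completeness only at
that class, which one merge repairs; either way a color is lost, since otherwise `G` would grow.
If no vertex can join `G`, every vertex outside `G` has arcs to and from `G`; by induction on the
number of vertices the rest of the digraph has a complete acyclic coloring with `k - 1` colors,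
and `G` is added to it as one more class.
-/

/-- The subset `S` of vertices induces an acyclic subdigraph of the digraph with
arc relation `A` (i.e. there is no directed cycle all of whose vertices lie in `S`). -/
def AcyclicSet {V : Type*} (A : V → V → Prop) (S : Set V) : Prop :=
  ∀ v : V, ¬ Relation.TransGen (fun x y => x ∈ S ∧ y ∈ S ∧ A x y) v v

/-- `c` is an acyclic vertex coloring of the digraph `A` with `k` colors:
`c` is surjective and every chromatic class induces an acyclic subdigraph. -/
def IsAcyclicColoring {V : Type*} (A : V → V → Prop) {k : ℕ} (c : V → Fin k) : Prop :=
  Function.Surjective c ∧ ∀ i : Fin k, AcyclicSet A {v | c v = i}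

/-- `c` is a complete vertex coloring of the digraph `A` with `k` colors:
`c` is surjective and for every ordered pair of distinct colors `(i, j)` there is
an arc `(u, v)` with `c u = i` and `c v = j`. -/
def IsCompleteColoring {V : Type*} (A : V → V → Prop) {k : ℕ} (c : V → Fin k) : Prop :=
  Function.Surjective c ∧
    ∀ i j : Fin k, i ≠ j → ∃ u v : V, A u v ∧ c u = i ∧ c v = j

/-- The diachromatic number: the largest `k` admitting a complete acyclic `k`-coloring. -/
noncomputable def dac {V : Type*} (A : V → V → Prop) : ℕ :=
  sSup {k | ∃ c : V → Fin k, IsAcyclicColoring A c ∧ IsCompleteColoring A c}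

/-- The dichromatic number: the smallest `k` admitting an acyclic `k`-coloring. -/
noncomputable def dc {V : Type*} (A : V → V → Prop) : ℕ :=
  sInf {k | ∃ c : V → Fin k, IsAcyclicColoring A c}

/-- The pseudoachromatic number: the largest `k` admitting a complete `k`-coloring. -/
noncomputable def psi {V : Type*} (A : V → V → Prop) : ℕ :=
  sSup {k | ∃ c : V → Fin k, IsCompleteColoring A c}

/-- `A` is a tournament: no loops, and for distinct vertices exactly one of the
two possible arcs is present. -/
def IsTournament {V : Type*} (A : V → V → Prop) : Prop :=
  (∀ v : V, ¬ A v v) ∧ ∀ u v : V, u ≠ v → (A u v ↔ ¬ A v u)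

open Finset Relation

lemma Relation.TransGen.restrict {α : Type*} {r : α → α → Prop} {S : Set α} {a b : α}
    (hS : ∀ ⦃x y⦄, r x y → x ∈ S → y ∈ S) (h : TransGen r a b) (ha : a ∈ S) :
    TransGen (fun x y => x ∈ S ∧ y ∈ S ∧ r x y) a b := by
  suffices b ∈ S ∧ TransGen (fun x y => x ∈ S ∧ y ∈ S ∧ r x y) a b from this.2
  induction h with
  | single hab => exact ⟨hS hab ha, .single ⟨ha, hS hab ha, hab⟩⟩
  | tail _ hbc ih => exact ⟨hS hbc ih.1, ih.2.tail ⟨ih.1, hS hbc ih.1, hbc⟩⟩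

section Colorings

variable {V β : Type*}

section AcyclicSet

variable {A : V → V → Prop}

lemma AcyclicSet.mono {S T : Set V} (hT : AcyclicSet A T) (hST : S ⊆ T) : AcyclicSet A S :=
  fun v hv => hT v (TransGen.mono (fun _ _ ⟨hx, hy, hxy⟩ => ⟨hST hx, hST hy, hxy⟩) v v hv)

lemma acyclicSet_of_subsingleton (hirr : ∀ v, ¬ A v v) {S : Set V} (hS : S.Subsingleton) :
    AcyclicSet A S := by
  intro v hv
  obtain ⟨w, ⟨hv, hw, hvw⟩, -⟩ := TransGen.head'_iff.mp hv
  exact hirr v (hS hw hv ▸ hvw)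

lemma AcyclicSet.union {P Q : Set V} (hP : AcyclicSet A P) (hQ : AcyclicSet A Q)
    (hPQ : ∀ u ∈ P, ∀ v ∈ Q, ¬ A u v) : AcyclicSet A (P ∪ Q) := by
  intro v hv
  obtain ⟨-, ⟨hvPQ, -, -⟩, -⟩ := TransGen.head'_iff.mp hv
  rcases hvPQ with hvP | hvQ
  · -- no path leaves `P`
    have hcyc := hv.restrict (S := P) (fun x y ⟨_, hy, hxy⟩ hx =>
      hy.resolve_right (hPQ x hx y · hxy)) hvP
    exact hP v (TransGen.mono (fun _ _ ⟨hx, hy, _, _, hxy⟩ => ⟨hx, hy, hxy⟩) v v hcyc)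
  · -- no path enters `Q`
    have hcyc := (transGen_swap.mpr hv).restrict (S := Q) (fun y x ⟨hx, _, hxy⟩ hy =>
      hx.resolve_left (hPQ x · y hy hxy)) hvQ
    exact hQ v (transGen_swap.mp
      (TransGen.mono (fun _ _ ⟨hy, hx, _, _, hxy⟩ => ⟨hx, hy, hxy⟩) v v hcyc))

lemma exists_arcs_of_not_acyclicSet_insert (hirr : ∀ v, ¬ A v v) {T : Set V} {y : V}
    (hT : AcyclicSet A T) (hyT : ¬ AcyclicSet A (insert y T)) :
    (∃ x ∈ T, A y x) ∧ ∃ x ∈ T, A x y := by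
  have hy : AcyclicSet A {y} := acyclicSet_of_subsingleton hirr Set.subsingleton_singleton
  rw [Set.insert_eq] at hyT
  constructor
  · by_contra! h
    exact hyT (hy.union hT (by simpa using h))
  · by_contra! h
    rw [Set.union_comm] at hyT
    exact hyT (hT.union hy (by simpa using h))

lemma AcyclicSet.preimage_val {P : V → Prop} {S : Set V} (h : AcyclicSet A S) :
    AcyclicSet (fun a b : Subtype P => A a b) (Subtype.val ⁻¹' S) :=
  fun x hx => h x (TransGen.lift Subtype.val (fun _ _ hab => hab) x x hx)

lemma AcyclicSet.image_val {P : V → Prop} {S : Set (Subtype P)}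
    (h : AcyclicSet (fun a b : Subtype P => A a b) S) : AcyclicSet A (Subtype.val '' S) := by
  have lift : ∀ {a b : V},
      TransGen (fun x y => x ∈ Subtype.val '' S ∧ y ∈ Subtype.val '' S ∧ A x y) a b →
      ∀ a' ∈ S, (a' : V) = a →
        ∃ b' ∈ S, (b' : V) = b ∧ TransGen (fun x y => x ∈ S ∧ y ∈ S ∧ A x y) a' b' := by
    intro a b hab
    induction hab with
    | single hab =>
      rintro a' ha' rfl
      obtain ⟨b', hb', rfl⟩ := hab.2.1
      exact ⟨b', hb', rfl, .single ⟨ha', hb', hab.2.2⟩⟩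
    | tail _ hbc ih =>
      intro a' ha' haa
      obtain ⟨b', hb', rfl, hab'⟩ := ih a' ha' haa
      obtain ⟨c', hc', rfl⟩ := hbc.2.1
      exact ⟨c', hc', rfl, hab'.tail ⟨hb', hc', hbc.2.2⟩⟩
  intro v hv
  obtain ⟨-, ⟨⟨v', hv', rfl⟩, -, -⟩, -⟩ := TransGen.head'_iff.mp hv
  obtain ⟨b', -, hb', hcyc⟩ := lift hv v' hv' rfl
  exact h v' (Subtype.ext hb' ▸ hcyc)

end AcyclicSet

section Maps

-- A map `g : V → β` is a coloring by arbitrary labels; its number of colors is `#(univ.image g)`.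

variable (A : V → V → Prop)

def HasAcyclicFibers (g : V → β) : Prop :=
  ∀ b, AcyclicSet A {v | g v = b}

def IsCompleteMap (g : V → β) : Prop :=
  ∀ u v, g u ≠ g v → ∃ x y, A x y ∧ g x = g u ∧ g y = g v

def IsCompleteMapAwayFrom (g : V → β) (s : β) : Prop :=
  ∀ u v, g u ≠ s → g v ≠ s → g u ≠ g v → ∃ x y, A x y ∧ g x = g u ∧ g y = g v

def HasCompleteAcyclicColoring (k : ℕ) : Prop :=
  ∃ c : V → Fin k, IsAcyclicColoring A c ∧ IsCompleteColoring A c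

variable {A} [Fintype V] [DecidableEq β]

lemma exists_surjective_fin_card_image (g : V → β) :
    ∃ c : V → Fin #(univ.image g), Function.Surjective c ∧ ∀ u v, c u = c v ↔ g u = g v := by
  let e := (univ.image g).equivFin
  refine ⟨fun v => e ⟨g v, mem_image_of_mem g (mem_univ v)⟩, fun j => ?_, fun u v => ?_⟩
  · obtain ⟨v, -, hv⟩ := mem_image.mp (e.symm j).2
    exact ⟨v, by simp [hv]⟩
  · simp [e.apply_eq_iff_eq]

lemma exists_acyclicColoring_card_image {g : V → β} (hg : HasAcyclicFibers A g) :
    ∃ c : V → Fin #(univ.image g), IsAcyclicColoring A c := by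
  obtain ⟨c, hsurj, hfib⟩ := exists_surjective_fin_card_image g
  refine ⟨c, hsurj, fun j => ?_⟩
  obtain ⟨w, rfl⟩ := hsurj j
  simpa only [hfib] using hg (g w)

lemma hasCompleteAcyclicColoring_card_image {g : V → β} (hg : HasAcyclicFibers A g)
    (hc : IsCompleteMap A g) : HasCompleteAcyclicColoring A #(univ.image g) := by
  obtain ⟨c, hsurj, hfib⟩ := exists_surjective_fin_card_image g
  refine ⟨c, ⟨hsurj, fun j => ?_⟩, hsurj, fun i j hij => ?_⟩
  · obtain ⟨w, rfl⟩ := hsurj j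
    simpa only [hfib] using hg (g w)
  · obtain ⟨u, rfl⟩ := hsurj i
    obtain ⟨v, rfl⟩ := hsurj j
    obtain ⟨x, y, hxy, hx, hy⟩ := hc u v (by rwa [Ne, ← hfib])
    exact ⟨x, y, hxy, (hfib x u).mpr hx, (hfib y v).mpr hy⟩

end Maps

section Merge

variable {A : V → V → Prop} [DecidableEq β] {g : V → β} {s t : β}

def mergeColor (g : V → β) (s t : β) : V → β :=
  fun v => if g v = s then t else g v

lemma mergeColor_of_ne {v : V} (h : g v ≠ s) : mergeColor g s t v = g v := if_neg h

lemma mergeColor_ne (hst : s ≠ t) (v : V) : mergeColor g s t v ≠ s := by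
  unfold mergeColor
  split_ifs with h
  exacts [hst.symm, h]

lemma HasAcyclicFibers.mergeColor (hg : HasAcyclicFibers A g)
    (hst : AcyclicSet A ({v | g v = s} ∪ {v | g v = t})) :
    HasAcyclicFibers A (mergeColor g s t) := by
  intro b
  by_cases hb : b = t
  · subst hb
    refine hst.mono fun v hv => ?_
    by_cases h : g v = s
    exacts [Or.inl h, Or.inr ((mergeColor_of_ne h).symm.trans hv)]
  · refine (hg b).mono fun v hv => ?_
    by_cases h : g v = s
    · exact absurd ((if_pos h).symm.trans hv).symm hb
    · exact (mergeColor_of_ne h).symm.trans hv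

lemma image_mergeColor [Fintype V] (hst : s ≠ t) (ht : t ∈ univ.image g) :
    univ.image (mergeColor g s t) = (univ.image g).erase s := by
  ext b
  simp only [mem_erase, mem_image, mem_univ, true_and] at ht ⊢
  constructor
  · rintro ⟨v, rfl⟩
    refine ⟨mergeColor_ne hst v, ?_⟩
    by_cases h : g v = s
    · simpa [mergeColor, h] using ht
    · exact ⟨v, (mergeColor_of_ne h).symm⟩
  · rintro ⟨hbs, v, rfl⟩
    exact ⟨v, mergeColor_of_ne hbs⟩

lemma IsCompleteMapAwayFrom.isCompleteMap_mergeColor (hc : IsCompleteMapAwayFrom A g s)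
    (hst : s ≠ t)
    (ht : ∃ w, g w = t) : IsCompleteMap A (mergeColor g s t) := by
  have hlift : ∀ u, ∃ u', g u' = mergeColor g s t u ∧ g u' ≠ s := by
    intro u
    by_cases h : g u = s
    · obtain ⟨w, rfl⟩ := ht
      exact ⟨w, (if_pos h).symm, hst.symm⟩
    · exact ⟨u, (mergeColor_of_ne h).symm, h⟩
  intro u v huv
  obtain ⟨u', hu', hu's⟩ := hlift u
  obtain ⟨v', hv', hv's⟩ := hlift v
  obtain ⟨x, y, hxy, hx, hy⟩ := hc u' v' hu's hv's (by rwa [hu', hv'])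
  refine ⟨x, y, hxy, ?_, ?_⟩
  · rw [mergeColor_of_ne (hx ▸ hu's), hx, hu']
  · rw [mergeColor_of_ne (hy ▸ hv's), hy, hv']

lemma IsCompleteMapAwayFrom.isCompleteMap_or_exists [Fintype V] (hg : HasAcyclicFibers A g)
    (hc : IsCompleteMapAwayFrom A g s) :
    IsCompleteMap A g ∨ ∃ h : V → β, HasAcyclicFibers A h ∧ IsCompleteMap A h ∧
      univ.image h = (univ.image g).erase s := by
  refine or_iff_not_imp_left.mpr fun hnc => ?_
  obtain ⟨u, v, huv, hno⟩ : ∃ u v, g u ≠ g v ∧ ∀ x y, A x y → g x = g u → g y ≠ g v := by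
    simpa [IsCompleteMap] using hnc
  have merge : ∀ t, t ≠ s → (∃ w, g w = t) → AcyclicSet A ({v | g v = s} ∪ {v | g v = t}) →
      ∃ h : V → β, HasAcyclicFibers A h ∧ IsCompleteMap A h ∧
        univ.image h = (univ.image g).erase s := fun t hts ht hU =>
    ⟨mergeColor g s t, hg.mergeColor hU, hc.isCompleteMap_mergeColor hts.symm ht,
      image_mergeColor hts.symm (by simpa using ht)⟩
  by_cases hus : g u = s
  · refine merge (g v) (hus ▸ huv.symm) ⟨v, rfl⟩ ((hg s).union (hg (g v)) ?_)
    intro x hx y hy hxy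
    exact hno x y hxy (hx.trans hus.symm) hy
  · have hvs : g v = s := by
      by_contra hvs
      obtain ⟨x, y, hxy, hx, hy⟩ := hc u v hus hvs huv
      exact hno x y hxy hx hy
    refine merge (g u) hus ⟨u, rfl⟩ (Set.union_comm _ _ ▸ (hg (g u)).union (hg s) ?_)
    intro x hx y hy hxy
    exact hno x y hxy hx (hy.trans hvs.symm)

end Merge

section Move

variable {A : V → V → Prop} [DecidableEq V] {g : V → β} {y : V} {i : β}

lemma HasAcyclicFibers.update (hg : HasAcyclicFibers A g)
    (hyi : AcyclicSet A (insert y {v | g v = i})) :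
    HasAcyclicFibers A (Function.update g y i) := by
  intro b
  by_cases hb : b = i
  · subst hb
    refine hyi.mono fun v hv => ?_
    by_cases hvy : v = y
    exacts [Or.inl hvy, Or.inr ((Function.update_of_ne hvy _ _).symm.trans hv)]
  · refine (hg b).mono fun v hv => ?_
    have hvy : v ≠ y := by
      rintro rfl
      exact hb ((Function.update_self _ _ _).symm.trans hv).symm
    exact (Function.update_of_ne hvy _ _).symm.trans hv

lemma IsCompleteMap.isCompleteMapAwayFrom_update (hc : IsCompleteMap A g) (hi : ∃ w, g w = i) :
    IsCompleteMapAwayFrom A (Function.update g y i) (g y) := by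
  have hlift : ∀ u, ∃ u', g u' = Function.update g y i u := by
    intro u
    by_cases hu : u = y
    · obtain ⟨w, hw⟩ := hi
      exact ⟨w, by rw [hu, Function.update_self, hw]⟩
    · exact ⟨u, (Function.update_of_ne hu _ _).symm⟩
  have hkeep : ∀ x, g x ≠ g y → Function.update g y i x = g x := fun x hx =>
    Function.update_of_ne (fun h => hx (congrArg g h)) _ _
  intro u v hus hvs huv
  obtain ⟨u', hu'⟩ := hlift u
  obtain ⟨v', hv'⟩ := hlift v
  obtain ⟨x, z, hxz, hx, hz⟩ := hc u' v' (by rwa [hu', hv'])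
  refine ⟨x, z, hxz, ?_, ?_⟩
  · rw [hkeep x (by rwa [hx, hu']), hx, hu']
  · rw [hkeep z (by rwa [hz, hv']), hz, hv']

end Move

section Numbers

variable {A : V → V → Prop}

lemma HasCompleteAcyclicColoring.dc_le {k : ℕ} (h : HasCompleteAcyclicColoring A k) :
    dc A ≤ k :=
  let ⟨c, hc, _⟩ := h
  Nat.sInf_le ⟨c, hc⟩

variable [Fintype V]

lemma bddAbove_hasCompleteAcyclicColoring : BddAbove {k | HasCompleteAcyclicColoring A k} :=
  ⟨Fintype.card V, fun _ ⟨c, hc, _⟩ => by simpa using Fintype.card_le_of_surjective c hc.1⟩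

lemma HasCompleteAcyclicColoring.le_dac {k : ℕ} (h : HasCompleteAcyclicColoring A k) :
    k ≤ dac A :=
  le_csSup bddAbove_hasCompleteAcyclicColoring h

lemma dc_le_card_image [DecidableEq β] {g : V → β} (hg : HasAcyclicFibers A g) :
    dc A ≤ #(univ.image g) :=
  Nat.sInf_le (exists_acyclicColoring_card_image hg)

lemma exists_acyclicColoring_dc (hirr : ∀ v, ¬ A v v) :
    ∃ c : V → Fin (dc A), IsAcyclicColoring A c := by
  classical
  exact Nat.sInf_mem (s := {k | ∃ c : V → Fin k, IsAcyclicColoring A c})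
    ⟨_, exists_acyclicColoring_card_image (g := id) fun _ =>
      acyclicSet_of_subsingleton hirr fun _ hx _ hy => hx.trans hy.symm⟩

/-- Otherwise merging two colors with no arc from the first to the second would give an
acyclic coloring with fewer than `dc A` colors. -/
lemma IsAcyclicColoring.isCompleteColoring_of_le_dc {k : ℕ} {c : V → Fin k}
    (hc : IsAcyclicColoring A c) (hk : k ≤ dc A) : IsCompleteColoring A c := by
  refine ⟨hc.1, fun p q hpq => ?_⟩
  by_contra! hno
  have hmerge : HasAcyclicFibers A (mergeColor c p q) :=
    HasAcyclicFibers.mergeColor hc.2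
      ((hc.2 p).union (hc.2 q) fun u hu v hv huv => hno u v huv hu hv)
  have hcard : #(univ.image (mergeColor c p q)) < k := by
    rw [image_mergeColor hpq (by simpa using hc.1 q), card_erase_of_mem (by simpa using hc.1 p)]
    have := (card_le_univ (univ.image c)).trans_eq (Fintype.card_fin k)
    have := p.pos
    omega
  exact (dc_le_card_image hmerge).not_gt (hcard.trans_le hk)

lemma hasCompleteAcyclicColoring_dc (hirr : ∀ v, ¬ A v v) :
    HasCompleteAcyclicColoring A (dc A) :=
  let ⟨c, hc⟩ := exists_acyclicColoring_dc hirr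
  ⟨c, hc, hc.isCompleteColoring_of_le_dc le_rfl⟩

lemma hasCompleteAcyclicColoring_dac (hirr : ∀ v, ¬ A v v) :
    HasCompleteAcyclicColoring A (dac A) :=
  Nat.sSup_mem ⟨_, hasCompleteAcyclicColoring_dc hirr⟩ bddAbove_hasCompleteAcyclicColoring

lemma dc_induced_le (hirr : ∀ v, ¬ A v v) (P : V → Prop) :
    dc (fun a b : Subtype P => A a b) ≤ dc A := by
  classical
  obtain ⟨c, hc⟩ := exists_acyclicColoring_dc hirr
  calc dc (fun a b : Subtype P => A a b)
      ≤ #(univ.image fun w : Subtype P => c w) := dc_le_card_image fun b => (hc.2 b).preimage_val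
    _ ≤ dc A := (card_le_univ _).trans (Fintype.card_fin _).le

end Numbers

section Interpolation

variable {A : V → V → Prop} [Fintype V]

lemma card_filter_update_eq [DecidableEq V] {k : ℕ} (g : V → Fin k) {y : V} {i : Fin k}
    (hyi : g y ≠ i) : #{v | Function.update g y i v = i} = #{v | g v = i} + 1 := by
  have : (univ.filter fun v => Function.update g y i v = i) =
      insert y (univ.filter fun v => g v = i) := by
    ext v
    by_cases hv : v = y
    · simp [hv]
    · simp [hv]
  rw [this, card_insert_of_notMem (by simpa using hyi)]

/-- Move `y` into the class `i`; if that breaks completeness, a merge restores it. -/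
lemma hasCompleteAcyclicColoring_or_exists_card_filter_lt {k : ℕ} {g : V → Fin (k + 1)}
    (hgA : IsAcyclicColoring A g) (hgC : IsCompleteColoring A g) {y : V} {i : Fin (k + 1)}
    (hyi : g y ≠ i) (hy : AcyclicSet A (insert y {v | g v = i})) :
    HasCompleteAcyclicColoring A k ∨ ∃ g' : V → Fin (k + 1),
      (IsAcyclicColoring A g' ∧ IsCompleteColoring A g') ∧ #{v | g v = i} < #{v | g' v = i} := by
  classical
  set g' := Function.update g y i
  have hA' : HasAcyclicFibers A g' := HasAcyclicFibers.update hgA.2 hy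
  have hC' : IsCompleteMapAwayFrom A g' (g y) :=
    IsCompleteMap.isCompleteMapAwayFrom_update (fun u v huv => hgC.2 _ _ huv) (hgA.1 i)
  have himage : (univ.image g').erase (g y) = univ.erase (g y) := by
    ext b
    simp only [mem_erase, mem_image, mem_univ, true_and, and_true]
    refine ⟨And.left, fun hb => ⟨hb, ?_⟩⟩
    obtain ⟨v, rfl⟩ := hgA.1 b
    exact ⟨v, Function.update_of_ne (fun h => hb (congrArg g h)) _ _⟩
  have hcard : #((univ : Finset (Fin (k + 1))).erase (g y)) = k := by simp
  rcases hC'.isCompleteMap_or_exists hA' with hcomplete | ⟨h, hhA, hhC, hh⟩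
  · by_cases hsurj : Function.Surjective g'
    · refine .inr ⟨g', ⟨⟨hsurj, hA'⟩, hsurj, fun a b hab => ?_⟩, ?_⟩
      · obtain ⟨u, rfl⟩ := hsurj a
        obtain ⟨v, rfl⟩ := hsurj b
        exact hcomplete u v hab
      · rw [card_filter_update_eq g hyi]
        exact Nat.lt_succ_self _
    · have hmiss : g y ∉ univ.image g' := fun hmem => hsurj fun b => by
        by_cases hb : b = g y
        · simpa [hb] using hmem
        · have : b ∈ (univ.image g').erase (g y) := himage ▸ mem_erase.mpr ⟨hb, mem_univ b⟩
          simpa using (mem_erase.mp this).2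
      have := hasCompleteAcyclicColoring_card_image hA' hcomplete
      exact .inl (by rwa [← erase_eq_of_notMem hmiss, himage, hcard] at this)
  · have := hasCompleteAcyclicColoring_card_image hhA hhC
    exact .inl (by rwa [hh, himage, hcard] at this)

lemma hasCompleteAcyclicColoring_induced_ne {k : ℕ} {g : V → Fin (k + 1)}
    (hgA : IsAcyclicColoring A g) (hgC : IsCompleteColoring A g) (i : Fin (k + 1)) :
    HasCompleteAcyclicColoring (fun a b : {v // g v ≠ i} => A a b) k := by
  classical
  have himage : univ.image (fun w : {v // g v ≠ i} => g w) = univ.erase i := by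
    ext b
    simp only [mem_image, mem_univ, true_and, mem_erase, and_true]
    constructor
    · rintro ⟨w, rfl⟩
      exact w.2
    · intro hb
      obtain ⟨v, rfl⟩ := hgA.1 b
      exact ⟨⟨v, hb⟩, rfl⟩
  have h := hasCompleteAcyclicColoring_card_image (g := fun w : {v // g v ≠ i} => g w)
    (fun b => (hgA.2 b).preimage_val) fun u v huv => by
      obtain ⟨x, z, hxz, hx, hz⟩ := hgC.2 _ _ huv
      exact ⟨⟨x, hx ▸ u.2⟩, ⟨z, hz ▸ v.2⟩, hxz, hx, hz⟩
  rwa [himage, card_erase_of_mem (mem_univ _), card_univ, Fintype.card_fin,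
    add_tsub_cancel_right] at h

lemma HasCompleteAcyclicColoring.of_induced {G : Set V} {m : ℕ} (hG : AcyclicSet A G)
    (hne : G.Nonempty) (harcs : ∀ w ∉ G, (∃ x ∈ G, A w x) ∧ ∃ x ∈ G, A x w)
    (hW : HasCompleteAcyclicColoring (fun a b : {v // v ∉ G} => A a b) m) :
    HasCompleteAcyclicColoring A (m + 1) := by
  classical
  obtain ⟨ρ, hρA, hρC⟩ := hW
  let τ : V → Option (Fin m) := fun v => if h : v ∈ G then none else some (ρ ⟨v, h⟩)
  have hτG : ∀ v ∈ G, τ v = none := fun v hv => dif_pos hv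
  have hτW : ∀ w : {v // v ∉ G}, τ w = some (ρ w) := fun w => dif_neg w.2
  have himage : univ.image τ = univ := by
    refine eq_univ_of_forall fun o => mem_image.mpr ?_
    rcases o with _ | j
    · obtain ⟨v, hv⟩ := hne
      exact ⟨v, mem_univ v, hτG v hv⟩
    · obtain ⟨w, rfl⟩ := hρA.1 j
      exact ⟨w, mem_univ _, hτW w⟩
  have h := hasCompleteAcyclicColoring_card_image (A := A) (g := τ) ?_ ?_
  · simpa [himage] using h
  · rintro (_ | j)
    · refine hG.mono fun v hv => ?_
      by_contra hvG
      exact Option.some_ne_none _ ((dif_neg hvG).symm.trans hv)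
    · refine (hρA.2 j).image_val.mono fun v hv => ?_
      have hvG : v ∉ G := fun hvG => Option.some_ne_none _ (hv.symm.trans (hτG v hvG))
      exact ⟨⟨v, hvG⟩, Option.some_injective _ ((hτW ⟨v, hvG⟩).symm.trans hv), rfl⟩
  · intro u v huv
    by_cases hu : u ∈ G <;> by_cases hv : v ∈ G
    · exact absurd ((hτG u hu).trans (hτG v hv).symm) huv
    · obtain ⟨x, hx, hxv⟩ := (harcs v hv).2
      exact ⟨x, v, hxv, (hτG x hx).trans (hτG u hu).symm, rfl⟩
    · obtain ⟨x, hx, hux⟩ := (harcs u hu).1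
      exact ⟨u, x, hux, rfl, (hτG x hx).trans (hτG v hv).symm⟩
    · have hρ : ρ ⟨u, hu⟩ ≠ ρ ⟨v, hv⟩ := fun h =>
        huv ((hτW ⟨u, hu⟩).trans (h ▸ (hτW ⟨v, hv⟩).symm))
      obtain ⟨x, z, hxz, hx, hz⟩ := hρC.2 _ _ hρ
      exact ⟨x, z, hxz, (hτW x).trans (hx ▸ (hτW ⟨u, hu⟩).symm),
        (hτW z).trans (hz ▸ (hτW ⟨v, hv⟩).symm)⟩

end Interpolation

end Colorings

universe u

theorem HasCompleteAcyclicColoring.of_succ {V : Type u} [Fintype V] {A : V → V → Prop}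
    (hirr : ∀ v, ¬ A v v) {k : ℕ} (hk : dc A ≤ k) (h : HasCompleteAcyclicColoring A (k + 1)) :
    HasCompleteAcyclicColoring A k := by
  classical
  induction hn : Fintype.card V using Nat.strong_induction_on generalizing V k with
  | _ n ih =>
  rcases hk.eq_or_lt with rfl | hlt
  · exact hasCompleteAcyclicColoring_dc hirr
  by_contra hno
  have : Nonempty {p : (V → Fin (k + 1)) × Fin (k + 1) //
      IsAcyclicColoring A p.1 ∧ IsCompleteColoring A p.1} :=
    let ⟨c, hc⟩ := h
    ⟨⟨(c, 0), hc⟩⟩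
  obtain ⟨⟨⟨g, i⟩, hgA, hgC⟩, hmax⟩ := Finite.exists_max fun p : {p : (V → Fin (k + 1)) ×
      Fin (k + 1) // IsAcyclicColoring A p.1 ∧ IsCompleteColoring A p.1} => #{v | p.1.1 v = p.1.2}
  by_cases hmove : ∃ y, g y ≠ i ∧ AcyclicSet A (insert y {v | g v = i})
  · obtain ⟨y, hyi, hy⟩ := hmove
    rcases hasCompleteAcyclicColoring_or_exists_card_filter_lt hgA hgC hyi hy with
      h' | ⟨g', hg', hlt'⟩
    · exact hno h'
    · exact (hmax ⟨(g', i), hg'⟩).not_gt hlt'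
  push Not at hmove
  obtain ⟨m, rfl⟩ : ∃ m, k = m + 1 := ⟨k - 1, by omega⟩
  obtain ⟨v₀, hv₀⟩ := hgA.1 i
  have hW := ih _ (hn ▸ Fintype.card_subtype_lt (p := fun v => g v ≠ i) (not_not.mpr hv₀))
    (A := fun a b : {v // g v ≠ i} => A a b) (fun w => hirr w)
    ((dc_induced_le hirr _).trans (by omega))
    (hasCompleteAcyclicColoring_induced_ne hgA hgC i) rfl
  exact hno (hW.of_induced (hgA.2 i) ⟨v₀, hv₀⟩ fun w hw =>
    exists_arcs_of_not_acyclicSet_insert hirr (hgA.2 i) (hmove w hw))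

/-- For a digraph `D` and an integer `l`, there exists a complete acyclic
`l`-coloring of `D` if and only if `dc(D) ≤ l ≤ dac(D)`. -/
theorem stmt16 {V : Type*} [Fintype V] (A : V → V → Prop)
    (hirr : ∀ v : V, ¬ A v v) (l : ℕ) :
    (∃ c : V → Fin l, IsAcyclicColoring A c ∧ IsCompleteColoring A c) ↔
      (dc A ≤ l ∧ l ≤ dac A) := by
  change HasCompleteAcyclicColoring A l ↔ _
  refine ⟨fun h => ⟨h.dc_le, h.le_dac⟩, fun ⟨hdc, hdac⟩ => ?_⟩
  exact Nat.decreasingInduction' (fun k _ hlk hk => hk.of_succ hirr (hdc.trans hlk)) hdac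
    (hasCompleteAcyclicColoring_dac hirr)
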